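/- Under Assumptions U and F, the deterministic BADR-GD iterates satisfy, for every t ≥ 0: ‖v*(w_{t+1}, λ_{t+1}) − v*(w_t, λ_t)‖ ≤ M_{v*}(τL^{ww}_{F,1}‖w_t − w*_t‖ + γ‖D_{λ,t}‖), where M_{v*} := L_{U,0}L^{ww}_{F,2}/μ_F² + L_{U,1}/μ_F. -/

import Mathlib

/-!
The dual solution solves the linear system `∇²_{ww}F(w, λ) v = ∇_w U(w, λ)`. Strong convexity
bounds every Hessian below by `μ_F`, so `‖v*‖ ≤ L_{U,0} / μ_F`, and comparing two such systems
gives `μ_F ‖Δv*‖ ≤ ‖Δ∇_w U‖ + ‖Δ∇²_{ww}F‖ ‖v*‖`. The Lipschitz assumptions bound both differences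
by `‖Δw‖ + ‖Δλ‖`; finally, since `∇_w F(w*_t, λ_t) = 0`, one gradient step moves `w` by at most
`τ L^{ww}_{F,1} ‖w_t − w*_t‖`.
-/

open MeasureTheory Finset

noncomputable section

/-- The model space `ℝ^d`. -/
abbrev Wsp (d : ℕ) : Type := EuclideanSpace ℝ (Fin d)

/-- The weight space `ℝ^S`. -/
abbrev Lsp (S : ℕ) : Type := EuclideanSpace ℝ (Fin S)

/-- Partial gradient `∇_w G(w, λ)`. -/
noncomputable def gradW {d S : ℕ} (G : Wsp d → Lsp S → ℝ) (w : Wsp d) (l : Lsp S) : Wsp d :=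
  gradient (fun w' => G w' l) w

/-- Partial gradient `∇_λ G(w, λ)`. -/
noncomputable def gradL {d S : ℕ} (G : Wsp d → Lsp S → ℝ) (w : Wsp d) (l : Lsp S) : Lsp S :=
  gradient (fun l' => G w l') l

/-- Hessian `∇²_{ww} G(w, λ)`, as a continuous linear map. -/
noncomputable def hessWW {d S : ℕ} (G : Wsp d → Lsp S → ℝ) (w : Wsp d) (l : Lsp S) :
    Wsp d →L[ℝ] Wsp d :=
  fderiv ℝ (fun w' => gradW G w' l) w

/-- Cross Hessian `∇²_{wλ} G(w, λ)`, as a continuous linear map `ℝ^S →L ℝ^d`. -/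
noncomputable def hessWL {d S : ℕ} (G : Wsp d → Lsp S → ℝ) (w : Wsp d) (l : Lsp S) :
    Lsp S →L[ℝ] Wsp d :=
  fderiv ℝ (fun l' => gradW G w l') l

open Set InnerProductSpace
open scoped RealInnerProductSpace

theorem ConvexOn.nonneg_of_hasDerivAt_deriv {ψ ψ' : ℝ → ℝ} {c x : ℝ}
    (hψ : ConvexOn ℝ univ ψ) (hψ' : ∀ t, HasDerivAt ψ (ψ' t) t) (hψ'' : HasDerivAt ψ' c x) :
    0 ≤ c := by
  have hmono : Monotone ψ' := by
    have hderiv : deriv ψ = ψ' := funext fun t => (hψ' t).deriv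
    rw [← hderiv, ← monotoneOn_univ]
    exact hψ.monotoneOn_deriv fun t _ => (hψ' t).differentiableAt
  exact hψ''.nonneg_of_monotone hmono

section InnerProduct

variable {E : Type*} [NormedAddCommGroup E] [InnerProductSpace ℝ E]

theorem mul_norm_le_norm_apply_of_mul_norm_sq_le_inner {μ : ℝ} {H : E → E}
    (hH : ∀ u, μ * ‖u‖ ^ 2 ≤ ⟪H u, u⟫) (x : E) : μ * ‖x‖ ≤ ‖H x‖ := by
  rcases eq_or_ne x 0 with rfl | hx
  · simp
  · refine le_of_mul_le_mul_right ?_ (norm_pos_iff.mpr hx)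
    calc μ * ‖x‖ * ‖x‖ = μ * ‖x‖ ^ 2 := by ring
      _ ≤ ⟪H x, x⟫ := hH x
      _ ≤ ‖H x‖ * ‖x‖ := real_inner_le_norm _ _

variable [CompleteSpace E] {f : E → ℝ} {x : E}

theorem IsLocalMin.gradient_eq_zero (h : IsLocalMin f x) : gradient f x = 0 := by
  rw [gradient, h.fderiv_eq_zero, map_zero]

theorem norm_gradient_le_of_lipschitz {C : ℝ} (hC : 0 ≤ C)
    (hf : ∀ y, |f y - f x| ≤ C * ‖y - x‖) : ‖gradient f x‖ ≤ C := by
  rw [gradient, LinearIsometryEquiv.norm_map]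
  exact norm_fderiv_le_of_lip' ℝ hC (.of_forall hf)

theorem StrongConvexOn.mul_norm_sq_le_inner_fderiv_gradient {μ : ℝ} {w : E}
    (hsc : StrongConvexOn univ μ f) (hf : Differentiable ℝ f)
    (hg : DifferentiableAt ℝ (gradient f) w) (u : E) :
    μ * ‖u‖ ^ 2 ≤ ⟪fderiv ℝ (gradient f) w u, u⟫ := by
  -- `f - μ/2 ‖·‖²` is convex along `t ↦ w + t • u`, and the derivative at `0` of its slope
  -- is `⟪∇²f(w) u, u⟫ - μ ‖u‖²`.
  set c : ℝ → E := fun t => AffineMap.lineMap (k := ℝ) w (w + u) t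
  have hc : ∀ t, HasDerivAt c u t := fun t => by
    simpa using AffineMap.hasDerivAt_lineMap (a := w) (b := w + u) (x := t)
  have hconv : ConvexOn ℝ univ fun t => f (c t) - μ / 2 * ‖c t‖ ^ 2 :=
    (strongConvexOn_iff_convex.mp hsc).comp_affineMap (AffineMap.lineMap w (w + u))
  have hderiv : ∀ t, HasDerivAt (fun t => f (c t) - μ / 2 * ‖c t‖ ^ 2)
      (⟪gradient f (c t), u⟫ - μ * ⟪c t, u⟫) t := fun t =>
    (((hf (c t)).hasGradientAt.hasFDerivAt.comp_hasDerivAt t (hc t)).sub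
      (((hc t).norm_sq).const_mul (μ / 2))).congr_deriv (by simp; ring)
  have hderiv2 : HasDerivAt (fun t => ⟪gradient f (c t), u⟫ - μ * ⟪c t, u⟫)
      (⟪fderiv ℝ (gradient f) w u, u⟫ - μ * ‖u‖ ^ 2) 0 :=
    (((hg.hasFDerivAt.comp_hasDerivAt_of_eq 0 (hc 0) (by simp [c])).inner ℝ
      (hasDerivAt_const 0 u)).sub
      (((hc 0).inner ℝ (hasDerivAt_const 0 u)).const_mul μ)).congr_deriv
      (by simp)
  linarith [hconv.nonneg_of_hasDerivAt_deriv hderiv hderiv2]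

end InnerProduct

section NormedSpace

variable {E F : Type*} [NormedAddCommGroup E] [NormedSpace ℝ E]
  [NormedAddCommGroup F] [NormedSpace ℝ F]

theorem norm_sub_le_of_apply_eq {μ M LA Lb s : ℝ} (hμ : 0 < μ) {A B : E →L[ℝ] F}
    (hA : ∀ x, μ * ‖x‖ ≤ ‖A x‖) (hB : ∀ x, μ * ‖x‖ ≤ ‖B x‖) {x y : E} {a b : F}
    (hx : A x = a) (hy : B y = b) (ha : ‖a‖ ≤ M) (hba : ‖b - a‖ ≤ Lb * s)
    (hBA : ‖B - A‖ ≤ LA * s) :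
    ‖y - x‖ ≤ (M * LA / μ ^ 2 + Lb / μ) * s := by
  have hxM : ‖x‖ ≤ M / μ := by
    rw [le_div_iff₀' hμ]
    exact (hA x).trans (hx ▸ ha)
  have hres : B (y - x) = (b - a) - (B - A) x := by
    rw [map_sub, hy, sub_apply, hx]
    abel
  have hmain : μ * ‖y - x‖ ≤ Lb * s + LA * s * (M / μ) :=
    calc μ * ‖y - x‖ ≤ ‖(b - a) - (B - A) x‖ := hres ▸ hB (y - x)
      _ ≤ ‖b - a‖ + ‖B - A‖ * ‖x‖ :=
        (norm_sub_le _ _).trans (add_le_add le_rfl ((B - A).le_opNorm x))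
      _ ≤ Lb * s + LA * s * (M / μ) :=
        add_le_add hba (mul_le_mul hBA hxM (norm_nonneg _) ((norm_nonneg _).trans hBA))
  rw [show (M * LA / μ ^ 2 + Lb / μ) * s = (Lb * s + LA * s * (M / μ)) / μ by
    field_simp; ring, le_div_iff₀' hμ]
  exact hmain

theorem norm_sub_smul_sub_self_le {g : E → E} {x x₀ : E} {τ L : ℝ} (hτ : 0 ≤ τ)
    (hx₀ : g x₀ = 0) (hg : ‖g x - g x₀‖ ≤ L * ‖x - x₀‖) :
    ‖(x - τ • g x) - x‖ ≤ τ * L * ‖x - x₀‖ := by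
  rw [sub_sub_cancel_left, norm_neg, norm_smul, Real.norm_of_nonneg hτ, mul_assoc]
  rw [hx₀, sub_zero] at hg
  exact mul_le_mul_of_nonneg_left hg hτ

end NormedSpace

section PartialDerivatives

variable {d S : ℕ} {G : Wsp d → Lsp S → ℝ}

theorem gradW_eq_toDual_symm {w : Wsp d} {l : Lsp S}
    (hG : DifferentiableAt ℝ (fun p : Wsp d × Lsp S => G p.1 p.2) (w, l)) :
    gradW G w l = (toDual ℝ (Wsp d)).symm
      ((fderiv ℝ (fun p : Wsp d × Lsp S => G p.1 p.2) (w, l)).comp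
        (ContinuousLinearMap.inl ℝ (Wsp d) (Lsp S))) := by
  have h := hG.hasFDerivAt.comp w (hasFDerivAt_prodMk_left (𝕜 := ℝ) w l)
  exact congrArg (toDual ℝ (Wsp d)).symm h.fderiv

theorem norm_gradW_sub_le (hG : Differentiable ℝ (fun p : Wsp d × Lsp S => G p.1 p.2))
    (w₁ w₂ : Wsp d) (l₁ l₂ : Lsp S) :
    ‖gradW G w₁ l₁ - gradW G w₂ l₂‖ ≤
      ‖fderiv ℝ (fun p : Wsp d × Lsp S => G p.1 p.2) (w₁, l₁) -
        fderiv ℝ (fun p : Wsp d × Lsp S => G p.1 p.2) (w₂, l₂)‖ := by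
  rw [gradW_eq_toDual_symm (hG _), gradW_eq_toDual_symm (hG _), ← map_sub,
    LinearIsometryEquiv.norm_map, ← ContinuousLinearMap.sub_comp]
  exact (ContinuousLinearMap.opNorm_comp_le _ _).trans
    (mul_le_of_le_one_right (norm_nonneg _) (ContinuousLinearMap.norm_inl_le_one ℝ _ _))

theorem differentiableAt_gradW (hG : ContDiff ℝ 2 (fun p : Wsp d × Lsp S => G p.1 p.2))
    (w : Wsp d) (l : Lsp S) : DifferentiableAt ℝ (fun w' => gradW G w' l) w := by
  have hG₁ := hG.differentiable (by norm_num)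
  have hG₂ := (hG.fderiv_right (m := 1) (by norm_num)).differentiable one_ne_zero
  -- over `ℝ` the conjugate-linear Riesz map is linear
  let riesz : StrongDual ℝ (Wsp d) ≃ₗᵢ[ℝ] Wsp d := (toDual ℝ (Wsp d)).symm
  have hgrad : (fun w' => gradW G w' l) = fun w' => riesz
      ((fderiv ℝ (fun p : Wsp d × Lsp S => G p.1 p.2) (w', l)).comp
        (ContinuousLinearMap.inl ℝ (Wsp d) (Lsp S))) :=
    funext fun w' => gradW_eq_toDual_symm (hG₁ _)
  rw [hgrad]
  exact riesz.toContinuousLinearEquiv.differentiableAt.comp w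
    (((hG₂ _).comp w (differentiableAt_id.prodMk (differentiableAt_const l))).clm_comp
      (differentiableAt_const _))

theorem mul_norm_le_norm_hessWW_apply {μ : ℝ} {l : Lsp S}
    (hG : ContDiff ℝ 2 (fun p : Wsp d × Lsp S => G p.1 p.2))
    (hsc : StrongConvexOn univ μ fun w => G w l) (w x : Wsp d) :
    μ * ‖x‖ ≤ ‖hessWW G w l x‖ :=
  mul_norm_le_norm_apply_of_mul_norm_sq_le_inner
    (hsc.mul_norm_sq_le_inner_fderiv_gradient
      ((hG.differentiable (by norm_num)).comp (differentiable_id.prodMk (differentiable_const l)))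
      (differentiableAt_gradW hG w l)) x

end PartialDerivatives

theorem dual_solution_drift_badr_gd_general
    {d S : ℕ}
    (C : Set (Lsp S))
    (U F : Wsp d → Lsp S → ℝ)
    (hUdiff : ContDiff ℝ 1 (fun p : Wsp d × Lsp S => U p.1 p.2))
    (hFdiff : ContDiff ℝ 2 (fun p : Wsp d × Lsp S => F p.1 p.2))
    (wstar : Lsp S → Wsp d)
    (hwstar : ∀ l ∈ C, ∀ w : Wsp d, F (wstar l) l ≤ F w l)
    -- Assumption U
    (LU0 LU1 : ℝ) (hLU0 : 0 < LU0) (hLU1 : 0 < LU1)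
    (hUlip : ∀ w₁ w₂ : Wsp d, ∀ l₁ ∈ C, ∀ l₂ ∈ C,
      |U w₁ l₁ - U w₂ l₂| ≤ LU0 * ‖((w₁, l₁) : Wsp d × Lsp S) - (w₂, l₂)‖)
    (hgradUlip : ∀ w₁ w₂ : Wsp d, ∀ l₁ ∈ C, ∀ l₂ ∈ C,
      ‖fderiv ℝ (fun p : Wsp d × Lsp S => U p.1 p.2) (w₁, l₁) -
          fderiv ℝ (fun p : Wsp d × Lsp S => U p.1 p.2) (w₂, l₂)‖ ≤
        LU1 * (‖w₁ - w₂‖ + ‖l₁ - l₂‖))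
    -- Assumption F
    (μF LF1 LF2ww : ℝ)
    (hμF : 0 < μF) (hLF2ww : 0 ≤ LF2ww)
    (hFsc : ∀ l ∈ C, StrongConvexOn Set.univ μF (fun w => F w l))
    (hgradFlip : ∀ l ∈ C, ∀ w₁ w₂ : Wsp d, ‖gradW F w₁ l - gradW F w₂ l‖ ≤ LF1 * ‖w₁ - w₂‖)
    (hhessWWlip : ∀ w₁ w₂ : Wsp d, ∀ l₁ ∈ C, ∀ l₂ ∈ C,
      ‖hessWW F w₁ l₁ - hessWW F w₂ l₂‖ ≤ LF2ww * (‖w₁ - w₂‖ + ‖l₁ - l₂‖))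
    -- the dual solution `v*(w, λ)`, characterized by `∇²_{ww}F(w,λ) v*(w,λ) = ∇_w U(w,λ)`
    (vstar : Wsp d → Lsp S → Wsp d)
    (hvstar : ∀ w : Wsp d, ∀ l ∈ C, hessWW F w l (vstar w l) = gradW U w l)
    -- Euclidean projection onto `C`
    (proj : Lsp S → Lsp S)
    (hprojmem : ∀ x, proj x ∈ C)
    -- deterministic BADR-GD iterates
    (τ γ : ℝ) (hτpos : 0 < τ) (hγpos : 0 < γ)
    (w v : ℕ → Wsp d) (lam : ℕ → Lsp S) (hlam0 : lam 0 ∈ C)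
    (hwrec : ∀ t, w (t + 1) = w t - τ • gradW F (w t) (lam t))
    (hlamrec : ∀ t, lam (t + 1) = proj (lam t - γ • (gradL U (w t) (lam t) +
        ContinuousLinearMap.adjoint (hessWL F (w t) (lam t)) (v t))))
    : ∀ t : ℕ,
      ‖vstar (w (t + 1)) (lam (t + 1)) - vstar (w t) (lam t)‖ ≤
        (LU0 * LF2ww / μF ^ 2 + LU1 / μF) *
          (τ * LF1 * ‖w t - wstar (lam t)‖ + γ * ‖γ⁻¹ • (lam t - lam (t + 1))‖) := by
  intro t
  have hlam : ∀ s, lam s ∈ C := by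
    rintro (_ | s)
    exacts [hlam0, hlamrec s ▸ hprojmem _]
  have hgradU : ‖gradW U (w t) (lam t)‖ ≤ LU0 :=
    norm_gradient_le_of_lipschitz hLU0.le fun w' => by
      simpa [Prod.norm_def] using hUlip w' (w t) _ (hlam t) _ (hlam t)
  have hwstep : ‖w (t + 1) - w t‖ ≤ τ * LF1 * ‖w t - wstar (lam t)‖ :=
    hwrec t ▸ norm_sub_smul_sub_self_le hτpos.le
      (IsLocalMin.gradient_eq_zero (.of_forall (hwstar _ (hlam t)))) (hgradFlip _ (hlam t) _ _)
  have hlamstep : ‖lam (t + 1) - lam t‖ = γ * ‖γ⁻¹ • (lam t - lam (t + 1))‖ := by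
    rw [norm_smul, norm_inv, Real.norm_of_nonneg hγpos.le, mul_inv_cancel_left₀ hγpos.ne',
      norm_sub_rev]
  calc ‖vstar (w (t + 1)) (lam (t + 1)) - vstar (w t) (lam t)‖
      ≤ (LU0 * LF2ww / μF ^ 2 + LU1 / μF) * (‖w (t + 1) - w t‖ + ‖lam (t + 1) - lam t‖) :=
        norm_sub_le_of_apply_eq hμF
          (mul_norm_le_norm_hessWW_apply hFdiff (hFsc _ (hlam t)) _)
          (mul_norm_le_norm_hessWW_apply hFdiff (hFsc _ (hlam (t + 1))) _)
          (hvstar _ _ (hlam t)) (hvstar _ _ (hlam (t + 1))) hgradU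
          ((norm_gradW_sub_le (hUdiff.differentiable one_ne_zero) _ _ _ _).trans
            (hgradUlip _ _ _ (hlam (t + 1)) _ (hlam t)))
          (hhessWWlip _ _ _ (hlam (t + 1)) _ (hlam t))
    _ ≤ (LU0 * LF2ww / μF ^ 2 + LU1 / μF) *
          (τ * LF1 * ‖w t - wstar (lam t)‖ + γ * ‖γ⁻¹ • (lam t - lam (t + 1))‖) := by
        gcongr
        exact hlamstep.le

/-- Drift of the dual solution along the deterministic BADR-GD iterates. -/
theorem dual_solution_drift_badr_gd
    {d S : ℕ} (hd : 1 ≤ d) (hS : 1 ≤ S)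
    (C : Set (Lsp S)) (hCne : C.Nonempty) (hCconv : Convex ℝ C) (hCcomp : IsCompact C)
    (U F : Wsp d → Lsp S → ℝ)
    (hUdiff : ContDiff ℝ 1 (fun p : Wsp d × Lsp S => U p.1 p.2))
    (hFdiff : ContDiff ℝ 2 (fun p : Wsp d × Lsp S => F p.1 p.2))
    (wstar : Lsp S → Wsp d)
    (hwstar : ∀ l ∈ C, ∀ w : Wsp d, F (wstar l) l ≤ F w l)
    -- Assumption U
    (LU0 LU1 : ℝ) (hLU0 : 0 < LU0) (hLU1 : 0 < LU1)
    (hUlip : ∀ w₁ w₂ : Wsp d, ∀ l₁ ∈ C, ∀ l₂ ∈ C,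
      |U w₁ l₁ - U w₂ l₂| ≤ LU0 * ‖((w₁, l₁) : Wsp d × Lsp S) - (w₂, l₂)‖)
    (hgradUlip : ∀ w₁ w₂ : Wsp d, ∀ l₁ ∈ C, ∀ l₂ ∈ C,
      ‖fderiv ℝ (fun p : Wsp d × Lsp S => U p.1 p.2) (w₁, l₁) -
          fderiv ℝ (fun p : Wsp d × Lsp S => U p.1 p.2) (w₂, l₂)‖ ≤
        LU1 * (‖w₁ - w₂‖ + ‖l₁ - l₂‖))
    -- Assumption F
    (μF LF1 LF2ww MC LF2wl : ℝ)
    (hμF : 0 < μF) (hLF1 : μF ≤ LF1) (hLF2ww : 0 ≤ LF2ww) (hMC : 0 < MC) (hLF2wl : 0 < LF2wl)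
    (hFsc : ∀ l ∈ C, StrongConvexOn Set.univ μF (fun w => F w l))
    (hgradFlip : ∀ l ∈ C, ∀ w₁ w₂ : Wsp d, ‖gradW F w₁ l - gradW F w₂ l‖ ≤ LF1 * ‖w₁ - w₂‖)
    (hhessWWlip : ∀ w₁ w₂ : Wsp d, ∀ l₁ ∈ C, ∀ l₂ ∈ C,
      ‖hessWW F w₁ l₁ - hessWW F w₂ l₂‖ ≤ LF2ww * (‖w₁ - w₂‖ + ‖l₁ - l₂‖))
    (hhessWLbd : ∀ l₁ ∈ C, ∀ l₂ ∈ C, ‖hessWL F (wstar l₁) l₂‖ ≤ MC)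
    (hhessWLlip : ∀ w₁ w₂ : Wsp d, ∀ l₁ ∈ C, ∀ l₂ ∈ C,
      ‖hessWL F w₁ l₁ - hessWL F w₂ l₂‖ ≤ LF2wl * (‖w₁ - w₂‖ + ‖l₁ - l₂‖))
    -- the dual solution `v*(w, λ)`, characterized by `∇²_{ww}F(w,λ) v*(w,λ) = ∇_w U(w,λ)`
    (vstar : Wsp d → Lsp S → Wsp d)
    (hvstar : ∀ w : Wsp d, ∀ l ∈ C, hessWW F w l (vstar w l) = gradW U w l)
    -- Euclidean projection onto `C`
    (proj : Lsp S → Lsp S)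
    (hprojmem : ∀ x, proj x ∈ C)
    (hprojmin : ∀ x, ∀ y ∈ C, ‖x - proj x‖ ≤ ‖x - y‖)
    -- deterministic BADR-GD iterates
    (τ ρ γ : ℝ) (hτpos : 0 < τ) (hρpos : 0 < ρ) (hγpos : 0 < γ)
    (w v : ℕ → Wsp d) (lam : ℕ → Lsp S) (hlam0 : lam 0 ∈ C)
    (hwrec : ∀ t, w (t + 1) = w t - τ • gradW F (w t) (lam t))
    (hvrec : ∀ t, v (t + 1) = v t - ρ • (hessWW F (w t) (lam t) (v t) + gradW U (w t) (lam t)))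
    (hlamrec : ∀ t, lam (t + 1) = proj (lam t - γ • (gradL U (w t) (lam t) +
        ContinuousLinearMap.adjoint (hessWL F (w t) (lam t)) (v t))))
    : ∀ t : ℕ,
      ‖vstar (w (t + 1)) (lam (t + 1)) - vstar (w t) (lam t)‖ ≤
        (LU0 * LF2ww / μF ^ 2 + LU1 / μF) *
          (τ * LF1 * ‖w t - wstar (lam t)‖ + γ * ‖γ⁻¹ • (lam t - lam (t + 1))‖) :=
  dual_solution_drift_badr_gd_general C U F hUdiff hFdiff wstar hwstar LU0 LU1 hLU0 hLU1 hUlip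
    hgradUlip μF LF1 LF2ww hμF hLF2ww hFsc hgradFlip hhessWWlip vstar hvstar proj hprojmem τ γ hτpos
    hγpos w v lam hlam0 hwrec hlamrec
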